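/- arXiv:1505.05296 — 3 statements merged into one kernel-verified Lean document; each statement's English description precedes it below -/
import Mathlib

section
/- Under the Setup, let C̄ denote the closure of C and C* its adjoint. Then for every p and every x ∈ V_p: x belongs to Dom(C* C̄), and C* C̄ x = C'_m C_m x = C'_p C_p x for every m ≥ p; in particular each V_p is invariant under C* C̄, and the operator G := -(1/2) C* C̄ agrees on V_p with the bounded operator G_p := -(1/2) C'_p C_p. -/
/-!
On `V p` the operator `C` is the bounded operator `C p`, so `C̄ x = C p x ∈ V p`. Pairing against
any `u ∈ D`, say `u ∈ V k`, and passing to a common level `m ≥ p, k`, where both compatibility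
conditions hold, gives `⟪C' p y, u⟫ = ⟪C'_m y, u⟫ = ⟪y, C_m u⟫ = ⟪y, C u⟫` for `y ∈ V p`. Hence
`C p x` lies in the domain of `C*` with `C* (C p x) = C' p (C p x)`.
-/

open scoped InnerProductSpace

namespace LinearPMap

variable {𝕜 E F : Type*} [RCLike 𝕜] [NormedAddCommGroup E] [InnerProductSpace 𝕜 E]
  [NormedAddCommGroup F] [InnerProductSpace 𝕜 F] [CompleteSpace E]

theorem exists_adjoint_apply_eq {T : E →ₗ.[𝕜] F} (hT : Dense (T.domain : Set E)) {y : F} {w : E}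
    (h : ∀ u : T.domain, ⟪w, (u : E)⟫_𝕜 = ⟪y, T u⟫_𝕜) :
    ∃ hy : y ∈ T.adjoint.domain, T.adjoint ⟨y, hy⟩ = w :=
  ⟨mem_adjoint_domain_of_exists y ⟨w, h⟩, adjoint_apply_eq hT _ h⟩

end LinearPMap

section InductiveLimit

variable {𝕜 H : Type*} [RCLike 𝕜] [NormedAddCommGroup H] [InnerProductSpace 𝕜 H] [CompleteSpace H]
  {V : ℕ → Submodule 𝕜 H} {C C' : ℕ → H →L[𝕜] H} {T : H →ₗ.[𝕜] H}

theorem inner_apply_eq_inner_limit_apply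
    (hCcomp : ∀ p m, p ≤ m → ∀ x ∈ V p, C m x = C p x)
    (hC'comp : ∀ p m, p ≤ m → ∀ x ∈ V p, C' m x = C' p x)
    (hadj : ∀ n, C' n = ContinuousLinearMap.adjoint (C n))
    (hTdom : ∀ u ∈ T.domain, ∃ n, u ∈ V n)
    (hT : ∀ n, ∀ x ∈ V n, ∀ hx : x ∈ T.domain, T ⟨x, hx⟩ = C n x)
    {n : ℕ} {y : H} (hy : y ∈ V n) (u : T.domain) :
    ⟪C' n y, (u : H)⟫_𝕜 = ⟪y, T u⟫_𝕜 := by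
  obtain ⟨k, hk⟩ := hTdom u u.2
  calc ⟪C' n y, (u : H)⟫_𝕜 = ⟪C' (max n k) y, (u : H)⟫_𝕜 := by
        rw [hC'comp n _ (le_max_left n k) y hy]
    _ = ⟪y, C (max n k) u⟫_𝕜 := by
        rw [hadj, ContinuousLinearMap.adjoint_inner_left]
    _ = ⟪y, T u⟫_𝕜 := by
        rw [hCcomp k _ (le_max_right n k) _ hk, hT k _ hk u.2]

end InductiveLimit

theorem stmt_2_general
    {H : Type*} [NormedAddCommGroup H] [InnerProductSpace ℂ H] [CompleteSpace H]
    (V : ℕ → Submodule ℂ H)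
    (C : ℕ → H →L[ℂ] H)
    (hCinv : ∀ n, ∀ x ∈ V n, C n x ∈ V n)
    (hCcomp : ∀ p m, p ≤ m → ∀ x ∈ V p, C m x = C p x)
    (C' : ℕ → H →L[ℂ] H)
    (hC'inv : ∀ n, ∀ x ∈ V n, C' n x ∈ V n)
    (hC'comp : ∀ p m, p ≤ m → ∀ x ∈ V p, C' m x = C' p x)
    (hadj : ∀ n, C' n = ContinuousLinearMap.adjoint (C n))
    (T : H →ₗ.[ℂ] H)
    (hTdom : ∀ x : H, x ∈ T.domain ↔ ∃ n, x ∈ V n)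
    (hdense : Dense (T.domain : Set H))
    (hT : ∀ n, ∀ x ∈ V n, ∀ hx : x ∈ T.domain, T ⟨x, hx⟩ = C n x) :
    ∀ p, ∀ x ∈ V p,
      ∃ (hx : x ∈ T.closure.domain) (hy : T.closure ⟨x, hx⟩ ∈ T.adjoint.domain),
        (∀ m, p ≤ m →
          T.adjoint ⟨T.closure ⟨x, hx⟩, hy⟩ = C' m (C m x) ∧
          C' m (C m x) = C' p (C p x)) ∧
        -- each `V p` is invariant under `C* C̄`
        T.adjoint ⟨T.closure ⟨x, hx⟩, hy⟩ ∈ V p ∧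
        -- `G = -(1/2) C* C̄` agrees on `V p` with `G_p = -(1/2) C'_p C_p`
        (-(1 / 2 : ℂ)) • T.adjoint ⟨T.closure ⟨x, hx⟩, hy⟩ =
          ((-(1 / 2 : ℂ)) • ((C' p).comp (C p))) x := by
  intro p x hxV
  have hxT : x ∈ T.domain := (hTdom x).2 ⟨p, hxV⟩
  have hx : x ∈ T.closure.domain := T.le_closure.1 hxT
  have hclosure : T.closure ⟨x, hx⟩ = C p x := (T.le_closure.2 rfl).symm.trans (hT p x hxV hxT)
  have hCx : C p x ∈ V p := hCinv p x hxV
  obtain ⟨hy, hadjoint⟩ := LinearPMap.exists_adjoint_apply_eq hdense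
    (y := T.closure ⟨x, hx⟩) (w := C' p (C p x))
    fun u => hclosure ▸ inner_apply_eq_inner_limit_apply hCcomp hC'comp hadj
      (fun u hu => (hTdom u).1 hu) hT hCx u
  have hstable : ∀ m, p ≤ m → C' m (C m x) = C' p (C p x) := fun m hpm => by
    rw [hCcomp p m hpm x hxV, hC'comp p m hpm _ hCx]
  refine ⟨hx, hy, fun m hpm => ⟨hadjoint.trans (hstable m hpm).symm, hstable m hpm⟩,
    hadjoint ▸ hC'inv p _ hCx, ?_⟩
  rw [hadjoint]
  simp

/-- Same setup as Statement 1 (in particular `T` is the densely defined operator `C`, with closure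
`C̄ = T.closure` and adjoint `C* = T.adjoint`).  Then for every `p` and every `x ∈ V p`:
`x` belongs to `Dom(C* C̄)` (i.e. `x ∈ Dom(C̄)` and `C̄ x ∈ Dom(C*)`), and
`C* C̄ x = C'_m C_m x = C'_p C_p x` for every `m ≥ p`; in particular each `V p` is invariant
under `C* C̄`, and the operator `G := -(1/2) C* C̄` agrees on `V p` with the bounded operator
`G_p := -(1/2) C'_p C_p`. -/
theorem stmt_2
    {H : Type*} [NormedAddCommGroup H] [InnerProductSpace ℂ H] [CompleteSpace H]
    (V : ℕ → Submodule ℂ H)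
    (hfin : ∀ n, FiniteDimensional ℂ (V n))
    (hmono : ∀ m n, m ≤ n → V m ≤ V n)
    (C : ℕ → H →L[ℂ] H)
    (hCinv : ∀ n, ∀ x ∈ V n, C n x ∈ V n)
    (hCcomp : ∀ p m, p ≤ m → ∀ x ∈ V p, C m x = C p x)
    (C' : ℕ → H →L[ℂ] H)
    (hC'inv : ∀ n, ∀ x ∈ V n, C' n x ∈ V n)
    (hC'comp : ∀ p m, p ≤ m → ∀ x ∈ V p, C' m x = C' p x)
    (hadj : ∀ n, C' n = ContinuousLinearMap.adjoint (C n))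
    (T : H →ₗ.[ℂ] H)
    (hTdom : ∀ x : H, x ∈ T.domain ↔ ∃ n, x ∈ V n)
    (hdense : Dense (T.domain : Set H))
    (hT : ∀ n, ∀ x ∈ V n, ∀ hx : x ∈ T.domain, T ⟨x, hx⟩ = C n x) :
    ∀ p, ∀ x ∈ V p,
      ∃ (hx : x ∈ T.closure.domain) (hy : T.closure ⟨x, hx⟩ ∈ T.adjoint.domain),
        (∀ m, p ≤ m →
          T.adjoint ⟨T.closure ⟨x, hx⟩, hy⟩ = C' m (C m x) ∧
          C' m (C m x) = C' p (C p x)) ∧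
        -- each `V p` is invariant under `C* C̄`
        T.adjoint ⟨T.closure ⟨x, hx⟩, hy⟩ ∈ V p ∧
        -- `G = -(1/2) C* C̄` agrees on `V p` with `G_p = -(1/2) C'_p C_p`
        (-(1 / 2 : ℂ)) • T.adjoint ⟨T.closure ⟨x, hx⟩, hy⟩ =
          ((-(1 / 2 : ℂ)) • ((C' p).comp (C p))) x :=
  stmt_2_general V C hCinv hCcomp C' hC'inv hC'comp hadj T hTdom hdense hT
end

section
/- Under the Setup, the subspace D = ⋃_n V_n is a core for the operator G := -(1/2) C* C̄ (with domain Dom(C* C̄)); that is, D ⊆ Dom(G) and the closure of the restriction of G to D equals G. -/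
/-!
Since `C* ⊇ C'` is densely defined, `C` is closable and `C̄` is a formal adjoint of `C*`, which
gives `Re ⟪G x, x⟫ = -½ ‖C̄ x‖²`: `G` is dissipative. The same identity makes `C̄ x_k` Cauchy
whenever `x_k` and `G x_k` are, so `G` is closed because `C̄` and `C*` are.

A closed dissipative operator satisfies `‖x‖ ≤ ‖x - G x‖`; hence the closure `B` of `G|_D` lies
in `G`, `1 - B` has closed range, and `1 - G` is injective, so `B = G` as soon as the range of
`1 - G|_D` is dense. It contains every `V_n`: there `G` agrees with `-½ C'_n C_n`, which leaves
the finite-dimensional `V_n` invariant, so the injective `1 - G` maps `V_n` onto itself.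
-/

open Filter Topology RCLike
open scoped InnerProductSpace

theorem cauchySeq_of_norm_sub_sq_le {E F G : Type*} [SeminormedAddCommGroup E]
    [SeminormedAddCommGroup F] [SeminormedAddCommGroup G] {f : ℕ → E} {g : ℕ → F} {h : ℕ → G}
    {K : ℝ} (hf : CauchySeq f) (hg : CauchySeq g)
    (hfgh : ∀ a b, ‖h a - h b‖ ^ 2 ≤ K * (‖f a - f b‖ * ‖g a - g b‖)) : CauchySeq h := by
  rw [cauchySeq_iff_tendsto_dist_atTop_0] at hf hg ⊢
  have hlim : Tendsto (fun p : ℕ × ℕ => √(K * (dist (f p.1) (f p.2) * dist (g p.1) (g p.2))))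
      atTop (𝓝 0) := by
    simpa using ((hf.mul hg).const_mul K).sqrt
  refine squeeze_zero (fun _ => dist_nonneg) (fun p => ?_) hlim
  rw [dist_eq_norm, dist_eq_norm, dist_eq_norm]
  exact Real.le_sqrt_of_sq_le (hfgh p.1 p.2)

namespace LinearPMap

section Closed

variable {R E F : Type*} [CommRing R] [AddCommGroup E] [Module R E] [AddCommGroup F] [Module R F]
  [TopologicalSpace E] [TopologicalSpace F]

theorem IsClosed.exists_apply_eq_of_tendsto {A : E →ₗ.[R] F} (hA : A.IsClosed) {ι : Type*}
    {l : Filter ι} [l.NeBot] {v : ι → A.domain} {x : E} {y : F}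
    (hx : Tendsto (fun k => (v k : E)) l (𝓝 x)) (hy : Tendsto (fun k => A (v k)) l (𝓝 y)) :
    ∃ hx : x ∈ A.domain, A ⟨x, hx⟩ = y := by
  obtain ⟨⟨x', hx'⟩, rfl, rfl⟩ := A.mem_graph_iff.mp <|
    hA.mem_of_tendsto (hx.prodMk_nhds hy) (Eventually.of_forall fun k => A.mem_graph (v k))
  exact ⟨hx', rfl⟩

theorem isClosed_of_tendsto [SequentialSpace (E × F)] {A : E →ₗ.[R] F}
    (h : ∀ (v : ℕ → A.domain) (x : E) (y : F), Tendsto (fun k => (v k : E)) atTop (𝓝 x) →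
      Tendsto (fun k => A (v k)) atTop (𝓝 y) → ∃ hx : x ∈ A.domain, A ⟨x, hx⟩ = y) :
    A.IsClosed := by
  refine IsSeqClosed.isClosed fun p q hp hpq => ?_
  choose v hv1 hv2 using fun k => A.mem_graph_iff.mp (hp k)
  obtain ⟨hq, hAq⟩ := h v q.1 q.2
    (by simpa only [hv1] using hpq.fst_nhds) (by simpa only [hv2] using hpq.snd_nhds)
  exact A.mem_graph_iff.mpr ⟨⟨q.1, hq⟩, rfl, hAq⟩

variable [ContinuousAdd E] [ContinuousAdd F] [TopologicalSpace R] [ContinuousSMul R E]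
  [ContinuousSMul R F]

theorem IsClosed.closure_eq {A : E →ₗ.[R] F} (hA : A.IsClosed) : A.closure = A :=
  eq_of_eq_graph <| (hA.isClosable.graph_closure_eq_closure_graph).symm.trans
    hA.submodule_topologicalClosure_eq

theorem IsClosed.closure_le {A B : E →ₗ.[R] F} (hB : B.IsClosed) (h : A ≤ B) : A.closure ≤ B :=
  hB.closure_eq ▸ hB.isClosable.closure_mono h

end Closed

section InnerProduct

variable {𝕜 E : Type*} [RCLike 𝕜] [NormedAddCommGroup E] [InnerProductSpace 𝕜 E]

section Adjoint

variable {F : Type*} [NormedAddCommGroup F] [InnerProductSpace 𝕜 F] [CompleteSpace E]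
  [CompleteSpace F] {T : E →ₗ.[𝕜] F}

theorem le_adjoint_adjoint (hT : Dense (T.domain : Set E)) (hT' : Dense (T†.domain : Set F)) :
    T ≤ T†† :=
  (adjoint_isFormalAdjoint hT).le_adjoint hT'

theorem isClosable_of_dense_adjoint_domain (hT : Dense (T.domain : Set E))
    (hT' : Dense (T†.domain : Set F)) : T.IsClosable :=
  isClosable_iff_exists_closed_extension.mpr
    ⟨T††, adjoint_isClosed hT', le_adjoint_adjoint hT hT'⟩

theorem closure_isFormalAdjoint (hT : Dense (T.domain : Set E))
    (hT' : Dense (T†.domain : Set F)) : T.closure.IsFormalAdjoint T† := by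
  have hle : T.closure ≤ T†† := (adjoint_isClosed hT').closure_le (le_adjoint_adjoint hT hT')
  intro x y
  rw [apply_comp_inclusion hle x]
  exact adjoint_isFormalAdjoint hT' _ y

end Adjoint

def IsDissipative (S : E →ₗ.[𝕜] E) : Prop :=
  ∀ x : S.domain, re ⟪S x, (x : E)⟫_𝕜 ≤ 0

namespace IsDissipative

variable {S B : E →ₗ.[𝕜] E}

theorem mono (hS : S.IsDissipative) (h : B ≤ S) : B.IsDissipative := fun x => by
  rw [apply_comp_inclusion h x]
  exact hS _

theorem norm_le_norm_sub_apply (hS : S.IsDissipative) (x : S.domain) :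
    ‖(x : E)‖ ≤ ‖(x : E) - S x‖ := by
  have h : ‖(x : E)‖ * ‖(x : E)‖ ≤ ‖(x : E) - S x‖ * ‖(x : E)‖ :=
    calc ‖(x : E)‖ * ‖(x : E)‖ = re ⟪(x : E), x⟫_𝕜 := by rw [inner_self_eq_norm_mul_norm]
      _ ≤ re ⟪(x : E), x⟫_𝕜 - re ⟪S x, x⟫_𝕜 := by linarith [hS x]
      _ = re ⟪(x : E) - S x, x⟫_𝕜 := by rw [inner_sub_left, _root_.map_sub]
      _ ≤ ‖(x : E) - S x‖ * ‖(x : E)‖ := re_inner_le_norm _ _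
  rcases (norm_nonneg (x : E)).eq_or_lt with h0 | h0
  · exact h0 ▸ norm_nonneg _
  · exact le_of_mul_le_mul_right h h0

theorem surjective_sub_apply [CompleteSpace E] (hS : S.IsDissipative) (hcl : S.IsClosed)
    (hd : DenseRange fun x : S.domain => (x : E) - S x) :
    Function.Surjective fun x : S.domain => (x : E) - S x := by
  intro w
  obtain ⟨w', hw', hw'lim⟩ := mem_closure_iff_seq_limit.mp (hd w)
  choose u hu using hw'
  dsimp only at hu
  have hu_cauchy : CauchySeq fun k => (u k : E) := by
    refine cauchySeq_of_norm_sub_sq_le (K := 1) hw'lim.cauchySeq hw'lim.cauchySeq fun a b => ?_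
    have h := hS.norm_le_norm_sub_apply (u a - u b)
    rw [map_sub, Submodule.coe_sub, sub_sub_sub_comm, hu a, hu b] at h
    nlinarith [norm_nonneg ((u a : E) - u b)]
  obtain ⟨z, hz⟩ := cauchySeq_tendsto_of_complete hu_cauchy
  have hSu : Tendsto (fun k => S (u k)) atTop (𝓝 (z - w)) := by
    simpa only [← hu, sub_sub_cancel] using hz.sub hw'lim
  obtain ⟨hzS, hSz⟩ := hcl.exists_apply_eq_of_tendsto hz hSu
  exact ⟨⟨z, hzS⟩, by simp only [hSz, sub_sub_cancel]⟩

theorem eq_of_le (hS : S.IsDissipative) (h : B ≤ S)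
    (hB : Function.Surjective fun x : B.domain => (x : E) - B x) : B = S := by
  refine eq_of_le_of_domain_eq h (le_antisymm h.1 fun x hx => ?_)
  obtain ⟨z, hz⟩ := hB ((x : E) - S ⟨x, hx⟩)
  dsimp only at hz
  have hxz : ‖x - (z : E)‖ ≤ 0 := by
    have h' := hS.norm_le_norm_sub_apply (⟨x, hx⟩ - Submodule.inclusion h.1 z)
    rwa [map_sub, ← apply_comp_inclusion h, Submodule.coe_sub, sub_sub_sub_comm,
      Submodule.coe_inclusion, hz, sub_self, norm_zero] at h'
  rw [sub_eq_zero.mp (norm_le_zero_iff.mp hxz)]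
  exact z.2

theorem exists_sub_apply_eq_of_finiteDimensional (hS : S.IsDissipative) {V : Submodule 𝕜 E}
    [FiniteDimensional 𝕜 V] {A : E →ₗ[𝕜] E} (hAV : ∀ x ∈ V, A x ∈ V)
    (hSA : ∀ x ∈ V, ∃ hx : x ∈ S.domain, S ⟨x, hx⟩ = A x) {y : E} (hy : y ∈ V) :
    ∃ x : S.domain, (x : E) - S x = y := by
  choose hdom hval using hSA
  set f : E →ₗ[𝕜] E := LinearMap.id - A
  have hmaps : ∀ x ∈ V, f x ∈ V := fun x hx => V.sub_mem hx (hAV x hx)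
  have hinj : Set.InjOn f V := by
    intro a ha b hb hab
    have h := hS.norm_le_norm_sub_apply ⟨a - b, hdom _ (V.sub_mem ha hb)⟩
    have hfab : (a - b) - A (a - b) = f a - f b := by
      simp only [f, LinearMap.sub_apply, LinearMap.id_apply, _root_.map_sub]
      abel
    rwa [hval _ (V.sub_mem ha hb), hfab, hab, sub_self, norm_zero, norm_le_zero_iff,
      sub_eq_zero] at h
  obtain ⟨x, hx, hxy⟩ := (LinearMap.injOn_iff_surjOn hmaps).mp hinj hy
  exact ⟨⟨x, hdom x hx⟩, by rw [hval x hx]; exact hxy⟩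

theorem closure_eq [CompleteSpace E] (hS : S.IsDissipative) (hcl : S.IsClosed) (h : B ≤ S)
    (hd : DenseRange fun x : B.domain => (x : E) - B x) : B.closure = S := by
  have hle : B.closure ≤ S := hcl.closure_le h
  refine hS.eq_of_le hle <| (hS.mono hle).surjective_sub_apply
    (hcl.isClosable.leIsClosable h).closure_isClosed <| hd.mono ?_
  rintro _ ⟨x, rfl⟩
  exact ⟨Submodule.inclusion (le_closure B).1 x, by
    dsimp only
    rw [← apply_comp_inclusion (le_closure B)]
    rfl⟩

end IsDissipative

section NegHalfAdjointMulClosure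

variable [CompleteSpace E]

structure IsNegHalfAdjointMulClosure (T S : E →ₗ.[𝕜] E) : Prop where
  mem_domain_iff : ∀ x : E,
    x ∈ S.domain ↔ ∃ hx : x ∈ T.closure.domain, T.closure ⟨x, hx⟩ ∈ T†.domain
  apply_eq : ∀ (x : E) (hxS : x ∈ S.domain) (hx : x ∈ T.closure.domain)
    (hy : T.closure ⟨x, hx⟩ ∈ T†.domain), S ⟨x, hxS⟩ = (-(1 / 2 : 𝕜)) • T† ⟨T.closure ⟨x, hx⟩, hy⟩

namespace IsNegHalfAdjointMulClosure

variable {T S : E →ₗ.[𝕜] E}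

theorem domain_le (hS : IsNegHalfAdjointMulClosure T S) : S.domain ≤ T.closure.domain := fun x hx =>
  ((hS.mem_domain_iff x).1 hx).1

theorem exists_adjoint_apply_eq (hS : IsNegHalfAdjointMulClosure T S) (x : S.domain) :
    ∃ hy : T.closure (Submodule.inclusion hS.domain_le x) ∈ T†.domain,
      T† ⟨_, hy⟩ = (-2 : 𝕜) • S x := by
  obtain ⟨hx, hy⟩ := (hS.mem_domain_iff x).1 x.2
  refine ⟨hy, ?_⟩
  rw [hS.apply_eq x x.2 hx hy, smul_smul]
  norm_num
  rfl

theorem exists_apply_eq_of_apply_eq (hS : IsNegHalfAdjointMulClosure T S) {x y : E}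
    (hx : x ∈ T.domain) (hTx : T ⟨x, hx⟩ = y) (hy : y ∈ T†.domain) :
    ∃ hxS : x ∈ S.domain, S ⟨x, hxS⟩ = (-(1 / 2 : 𝕜)) • T† ⟨y, hy⟩ := by
  have hxc : x ∈ T.closure.domain := (le_closure T).1 hx
  have hTcx : T.closure ⟨x, hxc⟩ = y := ((le_closure T).2 rfl).symm.trans hTx
  subst hTcx
  exact ⟨(hS.mem_domain_iff x).2 ⟨hxc, hy⟩, hS.apply_eq x _ hxc hy⟩

theorem norm_sq_closure_apply (hS : IsNegHalfAdjointMulClosure T S) (hT : Dense (T.domain : Set E))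
    (hT' : Dense (T†.domain : Set E)) (x : S.domain) :
    ‖T.closure (Submodule.inclusion hS.domain_le x)‖ ^ 2 = -2 * re ⟪S x, (x : E)⟫_𝕜 := by
  obtain ⟨hy, hTy⟩ := hS.exists_adjoint_apply_eq x
  have h := (closure_isFormalAdjoint hT hT').symm ⟨_, hy⟩ (Submodule.inclusion hS.domain_le x)
  rw [hTy] at h
  rw [← inner_self_eq_norm_sq (𝕜 := 𝕜), ← h, inner_smul_left]
  simp

theorem isDissipative (hS : IsNegHalfAdjointMulClosure T S) (hT : Dense (T.domain : Set E))
    (hT' : Dense (T†.domain : Set E)) : S.IsDissipative := fun x => by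
  nlinarith [hS.norm_sq_closure_apply hT hT' x,
    sq_nonneg ‖T.closure (Submodule.inclusion hS.domain_le x)‖]

theorem norm_sq_closure_apply_le (hS : IsNegHalfAdjointMulClosure T S)
    (hT : Dense (T.domain : Set E)) (hT' : Dense (T†.domain : Set E)) (x : S.domain) :
    ‖T.closure (Submodule.inclusion hS.domain_le x)‖ ^ 2 ≤ 2 * (‖(x : E)‖ * ‖S x‖) := by
  rw [hS.norm_sq_closure_apply hT hT', mul_comm ‖(x : E)‖]
  have := (neg_le_abs (re ⟪S x, (x : E)⟫_𝕜)).trans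
    ((abs_re_le_norm _).trans (norm_inner_le_norm _ _))
  linarith

theorem isClosed (hS : IsNegHalfAdjointMulClosure T S) (hT : Dense (T.domain : Set E))
    (hT' : Dense (T†.domain : Set E)) : S.IsClosed := by
  have hTc := isClosable_of_dense_adjoint_domain hT hT'
  set R : S.domain →ₗ[𝕜] E := T.closure.toFun ∘ₗ Submodule.inclusion hS.domain_le
  refine isClosed_of_tendsto fun v x y hvx hvy => ?_
  have hR_cauchy : CauchySeq fun k => R (v k) := by
    refine cauchySeq_of_norm_sub_sq_le (K := 2) hvx.cauchySeq hvy.cauchySeq fun a b => ?_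
    rw [← _root_.map_sub, ← map_sub, ← Submodule.coe_sub]
    exact hS.norm_sq_closure_apply_le hT hT' (v a - v b)
  obtain ⟨w, hw⟩ := cauchySeq_tendsto_of_complete hR_cauchy
  obtain ⟨hx, hTx⟩ := hTc.closure_isClosed.exists_apply_eq_of_tendsto
    (v := fun k => Submodule.inclusion hS.domain_le (v k)) hvx hw
  choose hy hTy using fun k => hS.exists_adjoint_apply_eq (v k)
  obtain ⟨hw', hTw⟩ := (adjoint_isClosed hT).exists_apply_eq_of_tendsto
    (v := fun k => ⟨R (v k), hy k⟩) hw ((hvy.const_smul (-2 : 𝕜)).congr fun k => (hTy k).symm)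
  subst hTx
  refine ⟨(hS.mem_domain_iff x).2 ⟨hx, hw'⟩, ?_⟩
  rw [hS.apply_eq x _ hx hw', hTw, smul_smul]
  norm_num

end IsNegHalfAdjointMulClosure

end NegHalfAdjointMulClosure

end InnerProduct

end LinearPMap

open LinearPMap

theorem exists_adjoint_apply_eq_of_mem {H : Type*} [NormedAddCommGroup H] [InnerProductSpace ℂ H]
    [CompleteSpace H] {V : ℕ → Submodule ℂ H} {C C' : ℕ → H →L[ℂ] H} {T : H →ₗ.[ℂ] H}
    (hCcomp : ∀ p m, p ≤ m → ∀ x ∈ V p, C m x = C p x)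
    (hC'comp : ∀ p m, p ≤ m → ∀ x ∈ V p, C' m x = C' p x)
    (hadj : ∀ n, C' n = ContinuousLinearMap.adjoint (C n))
    (hTdom : ∀ x : H, x ∈ T.domain ↔ ∃ n, x ∈ V n) (hdense : Dense (T.domain : Set H))
    (hT : ∀ n, ∀ x ∈ V n, ∀ hx : x ∈ T.domain, T ⟨x, hx⟩ = C n x) {n : ℕ} {y : H} (hy : y ∈ V n) :
    ∃ hy' : y ∈ T.adjoint.domain, T.adjoint ⟨y, hy'⟩ = C' n y := by
  have key : ∀ u : T.domain, ⟪C' n y, (u : H)⟫_ℂ = ⟪y, T u⟫_ℂ := fun u => by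
    obtain ⟨m, hum⟩ := (hTdom u).1 u.2
    rw [hT m u hum u.2, ← hCcomp m (max n m) (le_max_right n m) u hum,
      ← hC'comp n (max n m) (le_max_left n m) y hy, hadj, ContinuousLinearMap.adjoint_inner_left]
  exact ⟨mem_adjoint_domain_of_exists y ⟨_, key⟩, adjoint_apply_eq hdense _ key⟩

theorem stmt_3_general
    {H : Type*} [NormedAddCommGroup H] [InnerProductSpace ℂ H] [CompleteSpace H]
    (V : ℕ → Submodule ℂ H)
    (hfin : ∀ n, FiniteDimensional ℂ (V n))
    (C : ℕ → H →L[ℂ] H)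
    (hCinv : ∀ n, ∀ x ∈ V n, C n x ∈ V n)
    (hCcomp : ∀ p m, p ≤ m → ∀ x ∈ V p, C m x = C p x)
    (C' : ℕ → H →L[ℂ] H)
    (hC'inv : ∀ n, ∀ x ∈ V n, C' n x ∈ V n)
    (hC'comp : ∀ p m, p ≤ m → ∀ x ∈ V p, C' m x = C' p x)
    (hadj : ∀ n, C' n = ContinuousLinearMap.adjoint (C n))
    (T : H →ₗ.[ℂ] H)
    (hTdom : ∀ x : H, x ∈ T.domain ↔ ∃ n, x ∈ V n)
    (hdense : Dense (T.domain : Set H))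
    (hT : ∀ n, ∀ x ∈ V n, ∀ hx : x ∈ T.domain, T ⟨x, hx⟩ = C n x)
    -- `S` is the operator `G = -(1/2) C* C̄` with domain `Dom(C* C̄)`
    (S : H →ₗ.[ℂ] H)
    (hSdom : ∀ x : H,
      x ∈ S.domain ↔ ∃ hx : x ∈ T.closure.domain, T.closure ⟨x, hx⟩ ∈ T.adjoint.domain)
    (hSval : ∀ (x : H) (hxS : x ∈ S.domain) (hx : x ∈ T.closure.domain)
      (hy : T.closure ⟨x, hx⟩ ∈ T.adjoint.domain),
      S ⟨x, hxS⟩ = (-(1 / 2 : ℂ)) • T.adjoint ⟨T.closure ⟨x, hx⟩, hy⟩) :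
    -- `D ⊆ Dom(G)`
    (∀ n, ∀ x ∈ V n, x ∈ S.domain) ∧
    -- the closure of the restriction of `G` to `D` equals `G`
    (S.domRestrict (⨆ n, V n)).closure = S := by
  have hS : T.IsNegHalfAdjointMulClosure S := ⟨hSdom, hSval⟩
  have hadjoint {n y} (hy : y ∈ V n) :=
    exists_adjoint_apply_eq_of_mem hCcomp hC'comp hadj hTdom hdense hT hy
  have hT' : Dense (T.adjoint.domain : Set H) := hdense.mono fun y hy =>
    let ⟨_, hn⟩ := (hTdom y).1 hy; (hadjoint hn).1
  have hlevel n x (hx : x ∈ V n) :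
      ∃ hxS : x ∈ S.domain, S ⟨x, hxS⟩ = (-(1 / 2 : ℂ)) • C' n (C n x) := by
    obtain ⟨hy, hTy⟩ := hadjoint (hCinv n x hx)
    rw [← hTy]
    exact hS.exists_apply_eq_of_apply_eq ((hTdom x).2 ⟨n, hx⟩) (hT n x hx _) hy
  have hdiss := hS.isDissipative hdense hT'
  refine ⟨fun n x hx => (hlevel n x hx).1, hdiss.closure_eq (hS.isClosed hdense hT')
    domRestrict_le (hdense.mono fun y hy => ?_)⟩
  obtain ⟨n, hn⟩ := (hTdom y).1 hy
  have := hfin n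
  refine (hdiss.mono domRestrict_le).exists_sub_apply_eq_of_finiteDimensional
    (A := ((-(1 / 2 : ℂ)) • (C' n).comp (C n) : H →L[ℂ] H)) (fun x hx => ?_) (fun x hx => ?_) hn
  · exact (V n).smul_mem _ (hC'inv n _ (hCinv n x hx))
  · obtain ⟨hxS, hSx⟩ := hlevel n x hx
    exact ⟨⟨Submodule.mem_iSup_of_mem n hx, hxS⟩, (domRestrict_apply rfl).trans hSx⟩

/-- Same setup as Statement 1 (in particular `T` is the densely defined operator `C`, with closure
`C̄ = T.closure` and adjoint `C* = T.adjoint`), and `S` is the operator `G := -(1/2) C* C̄`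
with domain `Dom(C* C̄)`.  Then the subspace `D = ⋃ n, V n` is a core for `G`; that is,
`D ⊆ Dom(G)` and the closure of the restriction of `G` to `D` equals `G`. -/
theorem stmt_3
    {H : Type*} [NormedAddCommGroup H] [InnerProductSpace ℂ H] [CompleteSpace H]
    (V : ℕ → Submodule ℂ H)
    (hfin : ∀ n, FiniteDimensional ℂ (V n))
    (hmono : ∀ m n, m ≤ n → V m ≤ V n)
    (C : ℕ → H →L[ℂ] H)
    (hCinv : ∀ n, ∀ x ∈ V n, C n x ∈ V n)
    (hCcomp : ∀ p m, p ≤ m → ∀ x ∈ V p, C m x = C p x)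
    (C' : ℕ → H →L[ℂ] H)
    (hC'inv : ∀ n, ∀ x ∈ V n, C' n x ∈ V n)
    (hC'comp : ∀ p m, p ≤ m → ∀ x ∈ V p, C' m x = C' p x)
    (hadj : ∀ n, C' n = ContinuousLinearMap.adjoint (C n))
    (T : H →ₗ.[ℂ] H)
    (hTdom : ∀ x : H, x ∈ T.domain ↔ ∃ n, x ∈ V n)
    (hdense : Dense (T.domain : Set H))
    (hT : ∀ n, ∀ x ∈ V n, ∀ hx : x ∈ T.domain, T ⟨x, hx⟩ = C n x)
    -- `S` is the operator `G = -(1/2) C* C̄` with domain `Dom(C* C̄)`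
    (S : H →ₗ.[ℂ] H)
    (hSdom : ∀ x : H,
      x ∈ S.domain ↔ ∃ hx : x ∈ T.closure.domain, T.closure ⟨x, hx⟩ ∈ T.adjoint.domain)
    (hSval : ∀ (x : H) (hxS : x ∈ S.domain) (hx : x ∈ T.closure.domain)
      (hy : T.closure ⟨x, hx⟩ ∈ T.adjoint.domain),
      S ⟨x, hxS⟩ = (-(1 / 2 : ℂ)) • T.adjoint ⟨T.closure ⟨x, hx⟩, hy⟩) :
    -- `D ⊆ Dom(G)`
    (∀ n, ∀ x ∈ V n, x ∈ S.domain) ∧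
    -- the closure of the restriction of `G` to `D` equals `G`
    (S.domRestrict (⨆ n, V n)).closure = S :=
  stmt_3_general V hfin C hCinv hCcomp C' hC'inv hC'comp hadj T hTdom hdense hT S hSdom hSval
end

section
/- Under the Setup, fix n and x ∈ V_n, let G_n := -(1/2) C'_n C_n (a bounded operator on H) and define u(t) := exp(t G_n) x for t ≥ 0, where exp denotes the exponential of a bounded operator. Then for every t ≥ 0: u(t) ∈ V_n, u(t) ∈ Dom(C* C̄), the map t ↦ u(t) is differentiable in H with derivative u'(t) = -(1/2) C* C̄ u(t), and u(0) = x. -/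
/-!
Since `V n` is finite-dimensional, hence closed, and invariant under `G_n`, it is invariant under
every power of `t G_n` and so under `exp (t G_n)`. On `V n` the closure of `C` is just `C n`, and
the compatibility of the `C' m` with the adjoints of the `C m` shows that `C*` acts on `V n` as
`C'_n`; thus `-(1/2) C* C̄ = G_n` on `V n`, and the derivative of `t ↦ exp (t G_n) x` is
`G_n (exp (t G_n) x)`.
-/

namespace ContinuousLinearMap

variable {𝕜 E : Type*} [NontriviallyNormedField 𝕜] [NormedAddCommGroup E] [NormedSpace 𝕜 E]

def invtSubalgebra (p : Submodule 𝕜 E) : Subalgebra 𝕜 (E →L[𝕜] E) where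
  carrier := {A | ∀ y ∈ p, A y ∈ p}
  mul_mem' hA hB y hy := hA _ (hB y hy)
  add_mem' hA hB y hy := p.add_mem (hA y hy) (hB y hy)
  algebraMap_mem' c _ hy := p.smul_mem c hy

theorem mem_invtSubalgebra {p : Submodule 𝕜 E} {A : E →L[𝕜] E} :
    A ∈ invtSubalgebra p ↔ ∀ y ∈ p, A y ∈ p :=
  Iff.rfl

theorem isClosed_invtSubalgebra {p : Submodule 𝕜 E} (hp : IsClosed (p : Set E)) :
    IsClosed (invtSubalgebra p : Set (E →L[𝕜] E)) := by
  simp only [invtSubalgebra, Subalgebra.coe_mk, Set.ofPred_forall]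
  exact isClosed_biInter fun y _ => hp.preimage (continuous_id.clm_apply continuous_const)

theorem exp_apply_mem_of_invariant [CharZero 𝕜] {p : Submodule 𝕜 E}
    (hp : IsClosed (p : Set E)) {A : E →L[𝕜] E} (hA : ∀ y ∈ p, A y ∈ p) {x : E} (hx : x ∈ p) :
    NormedSpace.exp A x ∈ p := by
  have hexp : NormedSpace.exp A ∈ invtSubalgebra p := by
    rw [NormedSpace.exp_eq_tsum 𝕜]
    exact tsum_mem (isClosed_invtSubalgebra hp) fun k =>
      Subalgebra.smul_mem _ (pow_mem (mem_invtSubalgebra.2 hA) k) _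
  exact hexp x hx

end ContinuousLinearMap

theorem hasDerivAt_exp_smul_apply {E : Type*} [NormedAddCommGroup E] [NormedSpace ℂ E]
    [CompleteSpace E] (G : E →L[ℂ] E) (x : E) (t : ℝ) :
    HasDerivAt (fun s : ℝ => NormedSpace.exp ((s : ℂ) • G) x)
      (G (NormedSpace.exp ((t : ℂ) • G) x)) t := by
  have hsmul (s : ℝ) : (s : ℂ) • G = s • G := (RCLike.real_smul_eq_coe_smul s G).symm
  simp only [hsmul]
  exact ((ContinuousLinearMap.apply ℂ E x).restrictScalars ℝ).hasFDerivAt.comp_hasDerivAt t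
    (hasDerivAt_exp_smul_const' G t)

theorem inner_adjoint_apply_eq_inner_of_mem {H : Type*} [NormedAddCommGroup H]
    [InnerProductSpace ℂ H] [CompleteSpace H] {V : ℕ → Submodule ℂ H}
    {C : ℕ → H →L[ℂ] H} (hCcomp : ∀ p m, p ≤ m → ∀ x ∈ V p, C m x = C p x) {C' : ℕ → H →L[ℂ] H}
    (hC'comp : ∀ p m, p ≤ m → ∀ x ∈ V p, C' m x = C' p x)
    (hadj : ∀ n, C' n = ContinuousLinearMap.adjoint (C n)) {T : H →ₗ.[ℂ] H}
    (hTdom : ∀ x ∈ T.domain, ∃ n, x ∈ V n)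
    (hT : ∀ n, ∀ x ∈ V n, ∀ hx : x ∈ T.domain, T ⟨x, hx⟩ = C n x)
    {n : ℕ} {y : H} (hy : y ∈ V n) (w : T.domain) :
    inner ℂ (C' n y) (w : H) = inner ℂ y (T w) := by
  obtain ⟨m, hw⟩ := hTdom w w.2
  set k := max m n
  have hTw : T w = C k w := by
    rw [hT m w hw w.2, hCcomp m k (le_max_left m n) w hw]
  rw [hTw, ← hC'comp n k (le_max_right m n) y hy, hadj k,
    ContinuousLinearMap.adjoint_inner_left]

theorem stmt_4_general
    {H : Type*} [NormedAddCommGroup H] [InnerProductSpace ℂ H] [CompleteSpace H]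
    (V : ℕ → Submodule ℂ H)
    (hfin : ∀ n, FiniteDimensional ℂ (V n))
    (C : ℕ → H →L[ℂ] H)
    (hCinv : ∀ n, ∀ x ∈ V n, C n x ∈ V n)
    (hCcomp : ∀ p m, p ≤ m → ∀ x ∈ V p, C m x = C p x)
    (C' : ℕ → H →L[ℂ] H)
    (hC'inv : ∀ n, ∀ x ∈ V n, C' n x ∈ V n)
    (hC'comp : ∀ p m, p ≤ m → ∀ x ∈ V p, C' m x = C' p x)
    (hadj : ∀ n, C' n = ContinuousLinearMap.adjoint (C n))
    (T : H →ₗ.[ℂ] H)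
    (hTdom : ∀ x : H, x ∈ T.domain ↔ ∃ n, x ∈ V n)
    (hdense : Dense (T.domain : Set H))
    (hT : ∀ n, ∀ x ∈ V n, ∀ hx : x ∈ T.domain, T ⟨x, hx⟩ = C n x)
    (n : ℕ) (x : H) (hx : x ∈ V n)
    -- `G_n := -(1/2) C'_n C_n` and `u t := exp (t G_n) x`
    (Gn : H →L[ℂ] H) (hGn : Gn = (-(1 / 2 : ℂ)) • ((C' n).comp (C n)))
    (u : ℝ → H) (hu : ∀ t : ℝ, u t = NormedSpace.exp ((t : ℂ) • Gn) x) :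
    (∀ t : ℝ, 0 ≤ t →
      u t ∈ V n ∧
      ∃ (h1 : u t ∈ T.closure.domain)
        (h2 : T.closure ⟨u t, h1⟩ ∈ T.adjoint.domain),
        HasDerivAt u ((-(1 / 2 : ℂ)) • T.adjoint ⟨T.closure ⟨u t, h1⟩, h2⟩) t) ∧
    u 0 = x := by
  have hGnV (y : H) (hy : y ∈ V n) : Gn y ∈ V n := by
    rw [hGn]
    exact (V n).smul_mem _ (hC'inv n _ (hCinv n y hy))
  have huV (t : ℝ) : u t ∈ V n := by
    rw [hu t]
    have := hfin n
    exact ContinuousLinearMap.exp_apply_mem_of_invariant (V n).closed_of_finiteDimensional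
      (fun y hy => (V n).smul_mem _ (hGnV y hy)) hx
  refine ⟨fun t _ => ⟨huV t, ?_⟩, by simp [hu]⟩
  have hdom : u t ∈ T.domain := (hTdom _).2 ⟨n, huV t⟩
  have h1 : u t ∈ T.closure.domain := T.le_closure.1 hdom
  have hclosure : T.closure ⟨u t, h1⟩ = C n (u t) := by
    rw [← T.le_closure.2 (x := ⟨u t, hdom⟩) rfl, hT n _ (huV t) hdom]
  have hinner (w : T.domain) : inner ℂ (C' n (C n (u t))) (w : H) =
      inner ℂ (T.closure ⟨u t, h1⟩) (T w) := by
    rw [hclosure]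
    exact inner_adjoint_apply_eq_inner_of_mem hCcomp hC'comp hadj (fun z => (hTdom z).1) hT
      (hCinv n _ (huV t)) w
  have h2 := LinearPMap.mem_adjoint_domain_of_exists _ ⟨_, hinner⟩
  refine ⟨h1, h2, ?_⟩
  rw [LinearPMap.adjoint_apply_eq hdense ⟨_, h2⟩ hinner, funext hu]
  simpa [hGn] using hasDerivAt_exp_smul_apply Gn x t

/-- Same setup as Statement 1 (in particular `T` is the densely defined operator `C`, with closure
`C̄ = T.closure` and adjoint `C* = T.adjoint`).  Fix `n` and `x ∈ V n`, let
`G_n := -(1/2) C'_n C_n` (a bounded operator on `H`) and define `u t := exp (t G_n) x` for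
`t ≥ 0`, where `exp` denotes the exponential of a bounded operator.  Then for every `t ≥ 0`:
`u t ∈ V n`, `u t ∈ Dom(C* C̄)`, the map `t ↦ u t` is differentiable in `H` with derivative
`u' t = -(1/2) C* C̄ (u t)`, and `u 0 = x`. -/
theorem stmt_4
    {H : Type*} [NormedAddCommGroup H] [InnerProductSpace ℂ H] [CompleteSpace H]
    (V : ℕ → Submodule ℂ H)
    (hfin : ∀ n, FiniteDimensional ℂ (V n))
    (hmono : ∀ m n, m ≤ n → V m ≤ V n)
    (C : ℕ → H →L[ℂ] H)
    (hCinv : ∀ n, ∀ x ∈ V n, C n x ∈ V n)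
    (hCcomp : ∀ p m, p ≤ m → ∀ x ∈ V p, C m x = C p x)
    (C' : ℕ → H →L[ℂ] H)
    (hC'inv : ∀ n, ∀ x ∈ V n, C' n x ∈ V n)
    (hC'comp : ∀ p m, p ≤ m → ∀ x ∈ V p, C' m x = C' p x)
    (hadj : ∀ n, C' n = ContinuousLinearMap.adjoint (C n))
    (T : H →ₗ.[ℂ] H)
    (hTdom : ∀ x : H, x ∈ T.domain ↔ ∃ n, x ∈ V n)
    (hdense : Dense (T.domain : Set H))
    (hT : ∀ n, ∀ x ∈ V n, ∀ hx : x ∈ T.domain, T ⟨x, hx⟩ = C n x)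
    (n : ℕ) (x : H) (hx : x ∈ V n)
    -- `G_n := -(1/2) C'_n C_n` and `u t := exp (t G_n) x`
    (Gn : H →L[ℂ] H) (hGn : Gn = (-(1 / 2 : ℂ)) • ((C' n).comp (C n)))
    (u : ℝ → H) (hu : ∀ t : ℝ, u t = NormedSpace.exp ((t : ℂ) • Gn) x) :
    (∀ t : ℝ, 0 ≤ t →
      u t ∈ V n ∧
      ∃ (h1 : u t ∈ T.closure.domain)
        (h2 : T.closure ⟨u t, h1⟩ ∈ T.adjoint.domain),
        HasDerivAt u ((-(1 / 2 : ℂ)) • T.adjoint ⟨T.closure ⟨u t, h1⟩, h2⟩) t) ∧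
    u 0 = x :=
  stmt_4_general V hfin C hCinv hCcomp C' hC'inv hC'comp hadj T hTdom hdense hT n x hx Gn hGn u hu
end
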